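/- Let F be a field, f ∈ F[X,Y] with f(0,0) = 0, and suppose the Newton polygon of f at the origin has extremes (l,0) and (0,n) with l = qn (i.e. h = 0 in the division l = qn + h). If δ ∈ F satisfies that (Y − δX^q)^n is the initial form of f along the Newton polygon, then the transformed polynomial f₁(X,Y) = f(X, Y + δX^q) has Newton polygon with extremes (l₁, 0) and (0, n) for some l₁ > l (or no point on the horizontal axis). -/

import Mathlib

/-!
Give `X` weight `1` and `Y` weight `q`. The substitution `Y ↦ Y + δX^q` sends every monomial
to a weighted homogeneous polynomial of the same weight, and it sends the initial form
`(Y - δX^q)^n` to `Y^n`. The hypotheses on the Newton polygon say exactly that `f - (Y - δX^q)^n`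
only has monomials of weight `> l = qn`, so `f₁` agrees with `Y^n` on all monomials of weight
`≤ l`; these include `X^a` for `a ≤ l` and `Y^b` for `b ≤ n`.
-/

noncomputable def pcoeff {F : Type} [Field F] (f : MvPolynomial (Fin 2) F) (a b : ℕ) : F :=
  MvPolynomial.coeff (Finsupp.single 0 a + Finsupp.single 1 b) f

namespace MvPolynomial

variable {R σ τ M : Type*} [CommSemiring R] [AddCommMonoid M]

theorem IsWeightedHomogeneous.aeval {w : σ → M} {w' : τ → M} {φ : MvPolynomial σ R} {m : M}
    {g : σ → MvPolynomial τ R} (hφ : IsWeightedHomogeneous w φ m)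
    (hg : ∀ i, IsWeightedHomogeneous w' (g i) (w i)) :
    IsWeightedHomogeneous w' (aeval g φ) m := by
  rw [φ.as_sum, map_sum]
  refine IsWeightedHomogeneous.sum _ _ _ fun d hd => ?_
  rw [aeval_monomial, ← hφ (mem_support_iff.mp hd), Finsupp.weight_apply, algebraMap_eq]
  exact (IsWeightedHomogeneous.prod _ _ _ fun i _ => (hg i).pow (d i)).C_mul _

theorem coeff_aeval_eq_zero_of_weight_ne {w : σ → M} {w' : τ → M} {g : σ → MvPolynomial τ R}
    (hg : ∀ i, IsWeightedHomogeneous w' (g i) (w i)) {p : MvPolynomial σ R} {e : τ →₀ ℕ}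
    (he : ∀ d ∈ p.support, Finsupp.weight w d ≠ Finsupp.weight w' e) :
    coeff e (aeval g p) = 0 := by
  rw [p.as_sum, map_sum, coeff_sum]
  exact Finset.sum_eq_zero fun d hd =>
    ((isWeightedHomogeneous_monomial w d _ rfl).aeval hg).coeff_eq_zero e (he d hd).symm

end MvPolynomial

open MvPolynomial

variable {F : Type} [Field F]

theorem coeff_eq_pcoeff (p : MvPolynomial (Fin 2) F) (d : Fin 2 →₀ ℕ) :
    coeff d p = pcoeff p (d 0) (d 1) := by
  rw [pcoeff]
  congr
  ext i
  fin_cases i <;> simp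

theorem pcoeff_sub (p p' : MvPolynomial (Fin 2) F) (a b : ℕ) :
    pcoeff (p - p') a b = pcoeff p a b - pcoeff p' a b :=
  coeff_sub ..

theorem pcoeff_X_one_pow (n a b : ℕ) :
    pcoeff (X 1 ^ n : MvPolynomial (Fin 2) F) a b = if a = 0 ∧ b = n then 1 else 0 := by
  rw [pcoeff, coeff_X_pow]
  congr 1
  simp [Finsupp.ext_iff, Fin.forall_fin_two, eq_comm]

theorem weight_one_q (q : ℕ) (d : Fin 2 →₀ ℕ) : Finsupp.weight ![1, q] d = d 0 + q * d 1 := by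
  simp [Finsupp.weight_apply, Finsupp.sum_fintype, mul_comm]

theorem weight_one_q_single_add_single (q a b : ℕ) :
    Finsupp.weight ![1, q] (Finsupp.single (0 : Fin 2) a + Finsupp.single 1 b) = a + q * b := by
  simp [weight_one_q]

section Shear

variable (δ : F) (q : ℕ)

theorem isWeightedHomogeneous_C_mul_X_zero_pow :
    IsWeightedHomogeneous ![1, q] (C δ * X 0 ^ q : MvPolynomial (Fin 2) F) q := by
  simpa using ((isWeightedHomogeneous_X F ![1, q] 0).pow q).C_mul δ

theorem isWeightedHomogeneous_shear (i : Fin 2) :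
    IsWeightedHomogeneous ![1, q]
      ((![X 0, X 1 + C δ * X 0 ^ q] : Fin 2 → MvPolynomial (Fin 2) F) i) (![1, q] i) := by
  fin_cases i
  · exact isWeightedHomogeneous_X _ _ _
  · exact (isWeightedHomogeneous_X _ _ _).add (isWeightedHomogeneous_C_mul_X_zero_pow δ q)

theorem pcoeff_aeval_shear_eq_zero {p : MvPolynomial (Fin 2) F} {m : ℕ}
    (hp : ∀ a b, pcoeff p a b ≠ 0 → m < a + q * b) {a b : ℕ} (hab : a + q * b ≤ m) :
    pcoeff (aeval ![X 0, X 1 + C δ * X 0 ^ q] p) a b = 0 :=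
  coeff_aeval_eq_zero_of_weight_ne (isWeightedHomogeneous_shear δ q) fun d hd => by
    have := hp _ _ (by rwa [← coeff_eq_pcoeff, ← mem_support_iff])
    rw [weight_one_q, weight_one_q_single_add_single]
    omega

theorem weight_eq_of_pcoeff_initialForm_ne_zero {n a b : ℕ}
    (h : pcoeff ((X 1 - C δ * X 0 ^ q) ^ n : MvPolynomial (Fin 2) F) a b ≠ 0) :
    a + q * b = q * n := by
  have hg := ((isWeightedHomogeneous_X F ![1, q] 1).sub
    (isWeightedHomogeneous_C_mul_X_zero_pow δ q)).pow n
  by_contra hne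
  refine h (hg.coeff_eq_zero _ ?_)
  simpa [weight_one_q_single_add_single, mul_comm] using hne

theorem aeval_shear_initialForm (n : ℕ) :
    aeval (![X 0, X 1 + C δ * X 0 ^ q] : Fin 2 → MvPolynomial (Fin 2) F)
      ((X 1 - C δ * X 0 ^ q) ^ n) = X 1 ^ n := by
  simp

end Shear

theorem exists_least_ne_zero_or_eq_zero {M : Type*} [Zero M] (s : ℕ → M) {l : ℕ}
    (hs : ∀ a ≤ l, s a = 0) :
    (∃ l₁, l < l₁ ∧ s l₁ ≠ 0 ∧ ∀ a < l₁, s a = 0) ∨ ∀ a, s a = 0 := by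
  classical
  by_cases h : ∃ a, s a ≠ 0
  · exact .inl ⟨Nat.find h, lt_of_not_ge fun hle => Nat.find_spec h (hs _ hle), Nat.find_spec h,
      fun a ha => not_not.mp (Nat.find_min h ha)⟩
  · push Not at h
    exact .inr h

theorem lt_weight_of_pcoeff_sub_initialForm_ne_zero {f : MvPolynomial (Fin 2) F} {δ : F}
    {n q : ℕ} (hseg : ∀ a b, pcoeff f a b ≠ 0 → n * (q * n) ≤ n * a + q * n * b)
    (hinit : ∀ a b, n * a + q * n * b = n * (q * n) →
      pcoeff f a b = pcoeff ((X 1 - C δ * X 0 ^ q) ^ n) a b)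
    {a b : ℕ} (h : pcoeff (f - (X 1 - C δ * X 0 ^ q) ^ n) a b ≠ 0) :
    q * n < a + q * b := by
  have hweight : n * (a + q * b) = n * a + q * n * b := by ring
  rw [pcoeff_sub] at h
  by_cases hline : n * a + q * n * b = n * (q * n)
  · exact absurd (sub_eq_zero.mpr (hinit a b hline)) h
  have hinit_zero : pcoeff ((X 1 - C δ * X 0 ^ q) ^ n) a b = 0 := by
    by_contra hne
    exact hline (by rw [← hweight, weight_eq_of_pcoeff_initialForm_ne_zero δ q hne])
  rw [hinit_zero, sub_zero] at h
  have := hseg a b h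
  exact Nat.lt_of_mul_lt_mul_left (a := n) (by omega)

theorem stmt_3_general (F : Type) [Field F]
    (f : MvPolynomial (Fin 2) F)
    (l n q : ℕ) (hn : 0 < n) (hl : l = q * n)
    (hseg : ∀ a b : ℕ, pcoeff f a b ≠ 0 → n * l ≤ n * a + l * b)
    (δ : F)
    (hinit : ∀ a b : ℕ, n * a + l * b = n * l →
      pcoeff f a b =
        pcoeff ((MvPolynomial.X 1 - MvPolynomial.C δ * MvPolynomial.X 0 ^ q) ^ n) a b) :
    ∀ f₁ : MvPolynomial (Fin 2) F,
      f₁ = MvPolynomial.aeval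
        ![MvPolynomial.X 0, MvPolynomial.X 1 + MvPolynomial.C δ * MvPolynomial.X 0 ^ q] f →
      ((∃ l₁ : ℕ, l < l₁ ∧ pcoeff f₁ l₁ 0 ≠ 0 ∧ ∀ a < l₁, pcoeff f₁ a 0 = 0) ∨
        (∀ a : ℕ, pcoeff f₁ a 0 = 0)) ∧
      pcoeff f₁ 0 n ≠ 0 ∧ (∀ b < n, pcoeff f₁ 0 b = 0) := by
  intro f₁ hf₁
  subst hl
  have hf₁_sub : f₁ - X 1 ^ n =
      aeval ![X 0, X 1 + C δ * X 0 ^ q] (f - (X 1 - C δ * X 0 ^ q) ^ n) := by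
    rw [hf₁, map_sub, aeval_shear_initialForm δ q n]
  have hlow : ∀ a b, a + q * b ≤ q * n → pcoeff f₁ a b = pcoeff (X 1 ^ n) a b := fun a b hab =>
    sub_eq_zero.mp <| by
      rw [← pcoeff_sub, hf₁_sub, pcoeff_aeval_shear_eq_zero δ q
        (fun a b => lt_weight_of_pcoeff_sub_initialForm_ne_zero hseg hinit) hab]
  refine ⟨exists_least_ne_zero_or_eq_zero _ fun a ha => ?_, ?_, fun b hb => ?_⟩
  · rw [hlow a 0 (by simpa), pcoeff_X_one_pow, if_neg (by omega)]
  · rw [hlow 0 n (by simp), pcoeff_X_one_pow, if_pos ⟨rfl, rfl⟩]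
    exact one_ne_zero
  · rw [hlow 0 b (by simpa using Nat.mul_le_mul_left q hb.le), pcoeff_X_one_pow,
      if_neg (by omega)]

theorem stmt_3 (F : Type) [Field F]
    (f : MvPolynomial (Fin 2) F)
    (hf0 : pcoeff f 0 0 = 0)
    (l n q : ℕ) (hn : 0 < n) (hq : 0 < q) (hl : l = q * n)
    (hfl : pcoeff f l 0 ≠ 0) (hfn : pcoeff f 0 n ≠ 0)
    (hseg : ∀ a b : ℕ, pcoeff f a b ≠ 0 → n * l ≤ n * a + l * b)
    (δ : F)
    (hinit : ∀ a b : ℕ, n * a + l * b = n * l →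
      pcoeff f a b =
        pcoeff ((MvPolynomial.X 1 - MvPolynomial.C δ * MvPolynomial.X 0 ^ q) ^ n) a b) :
    ∀ f₁ : MvPolynomial (Fin 2) F,
      f₁ = MvPolynomial.aeval
        ![MvPolynomial.X 0, MvPolynomial.X 1 + MvPolynomial.C δ * MvPolynomial.X 0 ^ q] f →
      ((∃ l₁ : ℕ, l < l₁ ∧ pcoeff f₁ l₁ 0 ≠ 0 ∧ ∀ a < l₁, pcoeff f₁ a 0 = 0) ∨
        (∀ a : ℕ, pcoeff f₁ a 0 = 0)) ∧
      pcoeff f₁ 0 n ≠ 0 ∧ (∀ b < n, pcoeff f₁ 0 b = 0) :=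
  stmt_3_general F f l n q hn hl hseg δ hinit
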